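/- arXiv:2303.09515 — 2 statements merged into one kernel-verified Lean document; each statement's English description precedes it below -/
import Mathlib

section
/- Let α = 𝒞/N with 𝒞, N positive integers, 𝒞 < N, and let κ̄ = max(κ_max, ⌈α^{-1}⌉) for a fixed threshold κ_max. If the maximum age τ_max satisfies τ_max,{k+1} ≤ κ̄ whenever k lies outside a congestion interval, and τ_max,{k+1} ≤ τ_max,k + 1 during congestion intervals of length at most ⌈α^{-1}⌉ ≤ κ̄, and τ_max,0 ≤ κ̄, then τ_max,k ≤ 2κ̄ for all k ≥ 0. -/
/-- Uniform bound on the maximum AoI under MATB-P with erasure-free channel: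
with `κ̄ = max(κ_max, ⌈N/𝒞⌉)`, if the maximum age resets below `κ̄` after any
non-congested step, increases by at most one during congestion, every window of
`⌈N/𝒞⌉ + 1` consecutive steps contains a non-congested step (congestion intervals
have length at most `⌈N/𝒞⌉ ≤ κ̄`), and `τ_max,0 ≤ κ̄`, then `τ_max,k ≤ 2κ̄` for all
`k ≥ 0`. -/
theorem stmt_10 (C N : ℕ) (hC : 0 < C) (hCN : C < N) (κmax : ℕ)
    (κbar : ℕ) (hκbar : κbar = max κmax ⌈(N : ℚ) / C⌉₊)
    (τmax : ℕ → ℕ) (congested : ℕ → Prop)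
    (h0 : τmax 0 ≤ κbar)
    (hfree : ∀ k, ¬ congested k → τmax (k + 1) ≤ κbar)
    (hcong : ∀ k, congested k → τmax (k + 1) ≤ τmax k + 1)
    (hlen : ∀ k, ∃ j ∈ Finset.Icc k (k + ⌈(N : ℚ) / C⌉₊), ¬ congested j) :
    ∀ k, τmax k ≤ 2 * κbar := by
  set M := ⌈(N : ℚ) / C⌉₊ with hM
  have hMκ : M ≤ κbar := hκbar ▸ le_max_right _ _
  -- key lemma: if τmax a ≤ κbar then τmax (a + t) ≤ κbar + t
  have L : ∀ t a, τmax a ≤ κbar → τmax (a + t) ≤ κbar + t := by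
    intro t
    induction t with
    | zero => intro a ha; simpa using ha
    | succ t ih =>
      intro a ha
      by_cases hc : congested (a + t)
      · have := hcong _ hc
        calc τmax (a + (t + 1)) = τmax ((a + t) + 1) := by ring_nf
          _ ≤ τmax (a + t) + 1 := this
          _ ≤ (κbar + t) + 1 := by exact Nat.add_le_add_right (ih a ha) 1
          _ = κbar + (t + 1) := by ring
      · have := hfree _ hc
        calc τmax (a + (t + 1)) = τmax ((a + t) + 1) := by ring_nf
          _ ≤ κbar := this
          _ ≤ κbar + (t + 1) := Nat.le_add_right _ _
  intro k
  by_cases hk : k ≤ M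
  · have := L k 0 h0
    simp only [Nat.zero_add] at this
    calc τmax k ≤ κbar + k := this
      _ ≤ κbar + κbar := Nat.add_le_add_left (hk.trans hMκ) _
      _ = 2 * κbar := (Nat.two_mul κbar).symm
  · push_neg at hk
    obtain ⟨j, hj, hjc⟩ := hlen (k - M - 1)
    simp only [Finset.mem_Icc] at hj
    have hjk : j + 1 ≤ k := by omega
    have hfr : τmax (j + 1) ≤ κbar := hfree j hjc
    have hkj : k - (j + 1) ≤ M := by omega
    have := L (k - (j + 1)) (j + 1) hfr
    rw [Nat.add_sub_cancel' hjk] at this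
    calc τmax k ≤ κbar + (k - (j + 1)) := this
      _ ≤ κbar + κbar := Nat.add_le_add_left (hkj.trans hMκ) _
      _ = 2 * κbar := (Nat.two_mul κbar).symm
end

section
/- Let a ≥ 0 and b ≥ 0 satisfy a + b/(1−a)² < 1 with a < 1. Then the map T on bounded real sequences (μ_k)_{k≥0} defined by (Tμ)_k = a^k μ_0' + ∑_{j=0}^{k−1} a^{k−j−1} b ∑_{r=j+1}^∞ a^{r−j−1} μ_r (with fixed μ_0') is a contraction in the sup norm with Lipschitz constant at most a + b/(1−a)², and hence has a unique fixed point. -/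
/-! The constant term `a ^ k * μ₀'` cancels in `Tμ - Tν`. Each inner tail sum is a geometrically
weighted sum of `μ - ν`, hence bounded by `‖μ - ν‖ / (1 - a)`, and the outer convolution with
`a ^ (k - j - 1)` contributes another factor `1 / (1 - a)`. So `T` is Lipschitz with constant
`b / (1 - a) ^ 2 ≤ a + b / (1 - a) ^ 2 < 1`, and Banach's fixed point theorem applies on the
complete space `ℕ →ᵇ ℝ`. -/

open Finset
open scoped BoundedContinuousFunction

section GeometricTail

variable {a : ℝ}

lemma summable_pow_mul_apply_add (ha0 : 0 ≤ a) (ha1 : a < 1) (f : ℕ →ᵇ ℝ) (n : ℕ) :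
    Summable fun r : ℕ => a ^ r * f (n + r) :=
  .of_norm_bounded ((summable_geometric_of_lt_one ha0 ha1).mul_right ‖f‖) fun r => by
    rw [norm_mul, norm_pow, Real.norm_of_nonneg ha0]
    exact mul_le_mul_of_nonneg_left (f.norm_coe_le_norm _) (by positivity)

lemma norm_tsum_pow_mul_apply_add_le (ha0 : 0 ≤ a) (ha1 : a < 1) (f : ℕ →ᵇ ℝ) (n : ℕ) :
    ‖∑' r : ℕ, a ^ r * f (n + r)‖ ≤ ‖f‖ / (1 - a) := by
  rw [div_eq_inv_mul]
  refine tsum_of_norm_bounded ((hasSum_geometric_of_lt_one ha0 ha1).mul_right ‖f‖) fun r => ?_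
  rw [norm_mul, norm_pow, Real.norm_of_nonneg ha0]
  exact mul_le_mul_of_nonneg_left (f.norm_coe_le_norm _) (by positivity)

lemma tsum_pow_mul_apply_add_sub (ha0 : 0 ≤ a) (ha1 : a < 1) (f g : ℕ →ᵇ ℝ) (n : ℕ) :
    ∑' r : ℕ, a ^ r * f (n + r) - ∑' r : ℕ, a ^ r * g (n + r)
      = ∑' r : ℕ, a ^ r * (f - g) (n + r) := by
  rw [← (summable_pow_mul_apply_add ha0 ha1 f n).tsum_sub
    (summable_pow_mul_apply_add ha0 ha1 g n)]
  simp only [BoundedContinuousFunction.coe_sub, Pi.sub_apply, mul_sub]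

lemma sum_range_pow_sub_sub_one_le (ha0 : 0 ≤ a) (ha1 : a < 1) (k : ℕ) :
    ∑ j ∈ range k, a ^ (k - j - 1) ≤ 1 / (1 - a) := by
  have hreflect : ∑ j ∈ range k, a ^ (k - j - 1) = ∑ j ∈ Ico 0 k, a ^ j := by
    rw [← range_eq_Ico, ← sum_range_reflect (a ^ ·) k]
    exact sum_congr rfl fun j _ => by rw [Nat.sub_right_comm]
  simpa [hreflect] using geom_sum_Ico_le_of_lt_one (m := 0) (n := k) ha0 ha1

lemma abs_sum_pow_mul_tsum_sub_le {b : ℝ} (ha0 : 0 ≤ a) (ha1 : a < 1) (hb : 0 ≤ b)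
    (μ ν : ℕ →ᵇ ℝ) (k : ℕ) :
    |∑ j ∈ range k, a ^ (k - j - 1) * b * ∑' r : ℕ, a ^ r * μ (j + 1 + r)
      - ∑ j ∈ range k, a ^ (k - j - 1) * b * ∑' r : ℕ, a ^ r * ν (j + 1 + r)|
      ≤ b / (1 - a) ^ 2 * dist μ ν := by
  have h1a : 0 < 1 - a := sub_pos.2 ha1
  have hterm : ∀ j ∈ range k,
      |a ^ (k - j - 1) * b * ∑' r : ℕ, a ^ r * μ (j + 1 + r)
        - a ^ (k - j - 1) * b * ∑' r : ℕ, a ^ r * ν (j + 1 + r)|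
        ≤ a ^ (k - j - 1) * (b * (dist μ ν / (1 - a))) := fun j _ => by
    rw [← mul_sub, tsum_pow_mul_apply_add_sub ha0 ha1, abs_mul, abs_of_nonneg (by positivity),
      mul_assoc, dist_eq_norm]
    gcongr
    exact norm_tsum_pow_mul_apply_add_le ha0 ha1 (μ - ν) (j + 1)
  calc _ ≤ ∑ j ∈ range k, a ^ (k - j - 1) * (b * (dist μ ν / (1 - a))) := by
        rw [← sum_sub_distrib]
        exact (abs_sum_le_sum_abs _ _).trans (sum_le_sum hterm)
    _ = (∑ j ∈ range k, a ^ (k - j - 1)) * (b * (dist μ ν / (1 - a))) := by rw [sum_mul]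
    _ ≤ 1 / (1 - a) * (b * (dist μ ν / (1 - a))) := by
        gcongr
        exact sum_range_pow_sub_sub_one_le ha0 ha1 k
    _ = b / (1 - a) ^ 2 * dist μ ν := by field_simp

end GeometricTail

/-- Contraction property of the scalar mean-field consistency operator: if
`a + b/(1-a)² < 1` with `0 ≤ a < 1`, `0 ≤ b`, then the map
`(Tμ)_k = a^k μ₀' + ∑_{j<k} a^{k-j-1} b ∑_{r=0}^∞ a^r μ_{j+1+r}` on bounded sequences
is Lipschitz with constant `a + b/(1-a)²` in the sup norm, and hence has a unique
fixed point. -/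
theorem stmt_13 (a b μ0' : ℝ) (ha0 : 0 ≤ a) (ha1 : a < 1) (hb : 0 ≤ b)
    (hcontr : a + b / (1 - a) ^ 2 < 1)
    (T : BoundedContinuousFunction ℕ ℝ → BoundedContinuousFunction ℕ ℝ)
    (hT : ∀ (μ : BoundedContinuousFunction ℕ ℝ) (k : ℕ),
      T μ k = a ^ k * μ0' +
        ∑ j ∈ Finset.range k, a ^ (k - j - 1) * b * ∑' r : ℕ, a ^ r * μ (j + 1 + r)) :
    LipschitzWith (Real.toNNReal (a + b / (1 - a) ^ 2)) T ∧ ∃! μ, T μ = μ := by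
  have hc0 : 0 ≤ a + b / (1 - a) ^ 2 := by positivity
  have hdist : ∀ μ ν, dist (T μ) (T ν) ≤ (a + b / (1 - a) ^ 2) * dist μ ν := fun μ ν =>
    (BoundedContinuousFunction.dist_le (by positivity)).2 fun k => by
      rw [hT, hT, Real.dist_eq, add_sub_add_left_eq_sub]
      exact (abs_sum_pow_mul_tsum_sub_le ha0 ha1 hb μ ν k).trans
        (mul_le_mul_of_nonneg_right (le_add_of_nonneg_left ha0) dist_nonneg)
  have hlip : LipschitzWith (Real.toNNReal (a + b / (1 - a) ^ 2)) T :=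
    .of_dist_le_mul fun μ ν => by rw [Real.coe_toNNReal _ hc0]; exact hdist μ ν
  have hT_contracting : ContractingWith (Real.toNNReal (a + b / (1 - a) ^ 2)) T :=
    ⟨by simpa using hcontr, hlip⟩
  exact ⟨hlip, _, hT_contracting.fixedPoint_isFixedPt,
    fun _ => hT_contracting.fixedPoint_unique⟩
end
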